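/- arXiv:2511.15849 — 2 statements merged into one kernel-verified Lean document; each statement's English description precedes it below -/
import Mathlib

section
/- Let G be undirected, s, t nonadjacent, A ⊆ V(G)\{s,t} with A not adjacent to t, and suppose every vertex of A lies in some minimum s,t-separator of G (i.e., A consists of vertices contained in minimum s,t-separators). If T is a minimum ({s} ∪ A), t-separator of G of cardinality κ_{s,t}(G), then A ⊆ C_s(G−T). -/
open SimpleGraph

variable {V : Type*}

/-- `u` can reach `v` in `G − S`: there is a walk whose support avoids `S`. -/
def ReachAvoid (G : SimpleGraph V) (S : Set V) (u v : V) : Prop :=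
  ∃ p : G.Walk u v, ∀ w ∈ p.support, w ∉ S

/-- The union of the connected components of `G − S` that meet `X`. -/
def SetReach (G : SimpleGraph V) (S X : Set V) : Set V :=
  {v | ∃ x ∈ X, ReachAvoid G S x v}

/-- Open neighborhood of a vertex set: vertices outside `X` adjacent to some vertex of `X`. -/
def Nbhd (G : SimpleGraph V) (X : Set V) : Set V :=
  {v | v ∉ X ∧ ∃ x ∈ X, G.Adj x v}

/-- `S` is an `A,B`-separator of `G`. -/
def IsSep (G : SimpleGraph V) (A B S : Set V) : Prop :=
  Disjoint S A ∧ Disjoint S B ∧ ∀ a ∈ A, ∀ b ∈ B, ¬ ReachAvoid G S a b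

/-- `S` is an inclusion-minimal `A,B`-separator of `G`. -/
def IsMinlSep (G : SimpleGraph V) (A B S : Set V) : Prop :=
  IsSep G A B S ∧ ∀ S' ⊂ S, ¬ IsSep G A B S'

/-- `S` is a minimum-cardinality `A,B`-separator of `G`. -/
def IsMinSep (G : SimpleGraph V) (A B S : Set V) : Prop :=
  IsSep G A B S ∧ ∀ S', IsSep G A B S' → S.ncard ≤ S'.ncard

/-- The minimum cardinality of an `A,B`-separator of `G` (`∞` if none exists). -/
noncomputable def kappa (G : SimpleGraph V) (A B : Set V) : ℕ∞ :=
  sInf {n : ℕ∞ | ∃ S : Set V, IsSep G A B S ∧ (S.ncard : ℕ∞) = n}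

/-!
Let `S` be a minimum `s,t`-separator through `a` and `T` the given separator, which is also
minimum. By the submodularity of separators, the two "crossed" separators
`(S ∩ C_s(G−T)) ∪ (S ∩ T) ∪ (T ∩ C_s(G−S))` and its analogue on the `t`-side have total size at
most `|S| + |T|` and are contained in `S ∪ T`; since both have size at least `κ_{s,t}(G)`, they
must cover all of `S ∪ T`, in particular `a`. As `a ∉ T` and `T` separates `a` from `t`, the only
piece that can contain `a` is `S ∩ C_s(G−T)`.
-/

theorem Set.union_eq_of_ncard_add_le {α : Type*} [Finite α] {X₁ X₂ Y₁ Y₂ : Set α}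
    (hunion : Y₁ ∪ Y₂ ⊆ X₁ ∪ X₂) (hinter : Y₁ ∩ Y₂ ⊆ X₁ ∩ X₂)
    (hcard : X₁.ncard + X₂.ncard ≤ Y₁.ncard + Y₂.ncard) : Y₁ ∪ Y₂ = X₁ ∪ X₂ := by
  refine Set.eq_of_subset_of_ncard_le hunion ?_
  have hY := Set.ncard_union_add_ncard_inter Y₁ Y₂
  have hX := Set.ncard_union_add_ncard_inter X₁ X₂
  have := Set.ncard_le_ncard hinter
  omega

variable {G : SimpleGraph V}

namespace ReachAvoid

theorem refl {S : Set V} {u : V} (hu : u ∉ S) : ReachAvoid G S u u :=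
  ⟨Walk.nil, by simpa using hu⟩

theorem symm {S : Set V} {u v : V} (h : ReachAvoid G S u v) : ReachAvoid G S v u := by
  obtain ⟨p, hp⟩ := h
  exact ⟨p.reverse, by simpa using hp⟩

theorem trans {S : Set V} {u v w : V} (h₁ : ReachAvoid G S u v) (h₂ : ReachAvoid G S v w) :
    ReachAvoid G S u w := by
  obtain ⟨p, hp⟩ := h₁
  obtain ⟨q, hq⟩ := h₂
  refine ⟨p.append q, fun x hx => ?_⟩
  rcases (Walk.mem_support_append_iff p q).1 hx with h | h
  exacts [hp x h, hq x h]

theorem mono {S S' : Set V} {u v : V} (hS : S' ⊆ S) (h : ReachAvoid G S u v) :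
    ReachAvoid G S' u v := by
  obtain ⟨p, hp⟩ := h
  exact ⟨p, fun w hw hwS => hp w hw (hS hwS)⟩

theorem concat {S : Set V} {u v w : V} (h : ReachAvoid G S u v) (hvw : G.Adj v w) (hw : w ∉ S) :
    ReachAvoid G S u w := by
  obtain ⟨p, hp⟩ := h
  refine ⟨p.concat hvw, fun x hx => ?_⟩
  rw [Walk.support_concat, List.mem_append, List.mem_singleton] at hx
  rcases hx with hx | rfl
  exacts [hp x hx, hw]

end ReachAvoid

theorem mem_setReach_singleton {S : Set V} {s v : V} :
    v ∈ SetReach G S {s} ↔ ReachAvoid G S s v := by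
  simp [SetReach]

namespace IsSep

theorem symm {X Y S : Set V} (h : IsSep G X Y S) : IsSep G Y X S :=
  ⟨h.2.1, h.1, fun b hb a ha hr => h.2.2 a ha b hb hr.symm⟩

theorem mono_left {X X' Y S : Set V} (hX : X' ⊆ X) (h : IsSep G X Y S) : IsSep G X' Y S :=
  ⟨h.1.mono_right hX, h.2.1, fun a ha b hb => h.2.2 a (hX ha) b hb⟩

theorem disjoint_setReach {X Y S : Set V} (h : IsSep G X Y S) :
    Disjoint (SetReach G S X) (SetReach G S Y) := by
  rw [Set.disjoint_left]
  rintro v ⟨x, hx, hxv⟩ ⟨y, hy, hyv⟩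
  exact h.2.2 x hx y hy (hxv.trans hyv.symm)

end IsSep

theorem isMinSep_of_ncard_eq_kappa {X Y T : Set V} (hT : IsSep G X Y T)
    (hcard : (T.ncard : ℕ∞) = kappa G X Y) : IsMinSep G X Y T :=
  ⟨hT, fun _ hS => by exact_mod_cast hcard.trans_le (sInf_le ⟨_, hS, rfl⟩)⟩

def crossSep (G : SimpleGraph V) (S T X : Set V) : Set V :=
  (S ∩ SetReach G T X) ∪ (S ∩ T) ∪ (T ∩ SetReach G S X)

theorem crossSep_subset_union (S T X : Set V) : crossSep G S T X ⊆ S ∪ T := by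
  rintro w ((h | h) | h)
  exacts [Or.inl h.1, Or.inl h.1, Or.inr h.1]

/-- A walk from `X` to `Y` must leave the part of `G − (S ∪ T)` reachable from `X`; the vertex
where it does lies in `S ∪ T` and is reachable from `X` avoiding `S` or `T`, so it lies in the
crossed separator. -/
theorem isSep_crossSep {X Y S T : Set V} (hS : IsSep G X Y S) (hT : IsSep G X Y T) :
    IsSep G X Y (crossSep G S T X) := by
  have hsub := crossSep_subset_union (G := G) S T X
  refine ⟨(hS.1.union_left hT.1).mono_left hsub, (hS.2.1.union_left hT.2.1).mono_left hsub, ?_⟩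
  rintro a ha b hb ⟨p, hp⟩
  have haST : a ∉ S ∪ T := Set.disjoint_right.1 (hS.1.union_left hT.1) ha
  have hbR : b ∉ SetReach G (S ∪ T) X := fun ⟨x, hx, hxb⟩ =>
    hS.2.2 x hx b hb (hxb.mono Set.subset_union_left)
  obtain ⟨d, hd, hfst, hsnd⟩ :=
    p.exists_boundary_dart (SetReach G (S ∪ T) X) ⟨a, ha, ReachAvoid.refl haST⟩ hbR
  obtain ⟨x, hx, hxd⟩ := hfst
  have hdY : d.snd ∉ crossSep G S T X := hp _ (p.dart_snd_mem_support_of_mem_darts hd)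
  by_cases hdS : d.snd ∈ S <;> by_cases hdT : d.snd ∈ T
  · exact hdY (Or.inl (Or.inr ⟨hdS, hdT⟩))
  · exact hdY (Or.inl (Or.inl ⟨hdS, x, hx, (hxd.mono Set.subset_union_right).concat d.adj hdT⟩))
  · exact hdY (Or.inr ⟨hdT, x, hx, (hxd.mono Set.subset_union_left).concat d.adj hdS⟩)
  · exact hsnd ⟨x, hx, hxd.concat d.adj (by simp [hdS, hdT])⟩

theorem crossSep_inter_crossSep_subset {X Y S T : Set V} (hS : IsSep G X Y S)
    (hT : IsSep G X Y T) : crossSep G S T X ∩ crossSep G S T Y ⊆ S ∩ T := by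
  have hTR := Set.disjoint_left.1 hT.disjoint_setReach
  have hSR := Set.disjoint_left.1 hS.disjoint_setReach
  rintro w ⟨((h₁ | h₁) | h₁), ((h₂ | h₂) | h₂)⟩
  exacts [(hTR h₁.2 h₂.2).elim, ⟨h₁.1, h₂.2⟩, ⟨h₁.1, h₂.1⟩, ⟨h₂.1, h₁.2⟩, h₁, ⟨h₁.1, h₂.1⟩,
    ⟨h₂.1, h₁.1⟩, ⟨h₂.1, h₁.1⟩, (hSR h₁.2 h₂.2).elim]

theorem union_crossSep_eq [Finite V] {X Y S T : Set V} (hS : IsMinSep G X Y S)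
    (hT : IsMinSep G X Y T) : crossSep G S T X ∪ crossSep G S T Y = S ∪ T := by
  refine Set.union_eq_of_ncard_add_le
    (Set.union_subset (crossSep_subset_union S T X) (crossSep_subset_union S T Y))
    (crossSep_inter_crossSep_subset hS.1 hT.1) ?_
  have h₁ := hS.2 _ (isSep_crossSep hS.1 hT.1)
  have h₂ := hT.2 _ (isSep_crossSep hS.1.symm hT.1.symm).symm
  omega

theorem mem_setReach_of_mem_union_crossSep {X Y S T : Set V} {a : V} (haT : a ∉ T)
    (haY : a ∉ SetReach G T Y) (ha : a ∈ crossSep G S T X ∪ crossSep G S T Y) :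
    a ∈ SetReach G T X := by
  simp only [crossSep, Set.mem_union, Set.mem_inter_iff] at ha
  tauto

theorem subset_comp_of_minSep_vertices_general {V : Type*} [Fintype V] (G : SimpleGraph V) (s t : V)
    (A : Set V)
    (hAmin : ∀ a ∈ A, ∃ S : Set V, IsMinSep G {s} {t} S ∧ a ∈ S)
    (T : Set V) (hT : IsSep G ({s} ∪ A) {t} T)
    (hTcard : (T.ncard : ℕ∞) = kappa G {s} {t}) :
    A ⊆ SetReach G T {s} := by
  intro a ha
  obtain ⟨S, hS, haS⟩ := hAmin a ha
  have hTmin : IsMinSep G {s} {t} T :=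
    isMinSep_of_ncard_eq_kappa (hT.mono_left Set.subset_union_left) hTcard
  have haT : a ∉ T := Set.disjoint_right.1 hT.1 (Or.inr ha)
  have hat : a ∉ SetReach G T {t} := fun h =>
    hT.2.2 a (Or.inr ha) t rfl (mem_setReach_singleton.1 h).symm
  refine mem_setReach_of_mem_union_crossSep (S := S) haT hat ?_
  rw [union_crossSep_eq hS hTmin]
  exact Or.inl haS

/-- If every vertex of `A` lies in some minimum `s,t`-separator, `A` is not adjacent to `t`,
and `T` is an `({s} ∪ A),t`-separator of cardinality `κ_{s,t}(G)`, then `A ⊆ C_s(G−T)`. -/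
theorem subset_comp_of_minSep_vertices {V : Type*} [Fintype V] (G : SimpleGraph V) (s t : V)
    (hst : s ≠ t) (hadj : ¬ G.Adj s t) (A : Set V) (hsA : s ∉ A) (htA : t ∉ A)
    (hAt : ∀ a ∈ A, a ≠ t ∧ ¬ G.Adj a t)
    (hAmin : ∀ a ∈ A, ∃ S : Set V, IsMinSep G {s} {t} S ∧ a ∈ S)
    (T : Set V) (hT : IsSep G ({s} ∪ A) {t} T)
    (hTcard : (T.ncard : ℕ∞) = kappa G {s} {t}) :
    A ⊆ SetReach G T {s} :=
  subset_comp_of_minSep_vertices_general G s t A hAmin T hT hTcard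
end

section
/- Let G be an undirected graph, s,t nonadjacent, D ⊆ V(G)\{s,t}, and T a minimum ({s}∪D),t-separator. Set T' = N_G(C_s(G−T)), and let G' be the induced subgraph on C_s(G−T) ∪ T' ∪ C_t(G−T). Then κ_{s,t}(G') = κ_{s,t}(G). -/
open SimpleGraph

variable {V : Type*}

/-- `S` is an `A,B`-separator of the induced subgraph `G[W]`. -/
def IsSepIn (G : SimpleGraph V) (W A B S : Set V) : Prop :=
  S ⊆ W ∧ Disjoint S A ∧ Disjoint S B ∧ ∀ a ∈ A, ∀ b ∈ B, ¬ ReachAvoid G (S ∪ Wᶜ) a b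

/-- Minimum cardinality of an `A,B`-separator of the induced subgraph `G[W]`. -/
noncomputable def kappaIn (G : SimpleGraph V) (W A B : Set V) : ℕ∞ :=
  sInf {n : ℕ∞ | ∃ S : Set V, IsSepIn G W A B S ∧ (S.ncard : ℕ∞) = n}

section Aux

variable {V : Type*}

lemma reachAvoid_mono {G : SimpleGraph V} {S S' : Set V} (h : S' ⊆ S) {u v : V}
    (hr : ReachAvoid G S u v) : ReachAvoid G S' u v := by
  obtain ⟨p, hp⟩ := hr
  exact ⟨p, fun w hw hw' => hp w hw (h hw')⟩

lemma reachAvoid_refl {G : SimpleGraph V} {S : Set V} {u : V} (hu : u ∉ S) :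
    ReachAvoid G S u u :=
  ⟨SimpleGraph.Walk.nil, by simp [hu]⟩

lemma reachAvoid_symm {G : SimpleGraph V} {S : Set V} {u v : V}
    (h : ReachAvoid G S u v) : ReachAvoid G S v u := by
  obtain ⟨p, hp⟩ := h
  exact ⟨p.reverse, fun w hw => hp w (by simpa [SimpleGraph.Walk.support_reverse] using hw)⟩

lemma reachAvoid_trans {G : SimpleGraph V} {S : Set V} {u v w : V}
    (h1 : ReachAvoid G S u v) (h2 : ReachAvoid G S v w) : ReachAvoid G S u w := by
  obtain ⟨p, hp⟩ := h1; obtain ⟨q, hq⟩ := h2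
  refine ⟨p.append q, fun x hx => ?_⟩
  rcases (SimpleGraph.Walk.mem_support_append_iff _ _).mp hx with h | h
  · exact hp x h
  · exact hq x h

/-- Every vertex on a walk to `t` avoiding `T` is reachable from `t` avoiding `T`. -/
lemma support_reach {G : SimpleGraph V} {T : Set V} {w t : V} (q : G.Walk w t)
    (hq : ∀ x ∈ q.support, x ∉ T) : ∀ x ∈ q.support, ReachAvoid G T t x := by
  classical
  intro x hx
  exact reachAvoid_symm ⟨q.dropUntil x hx,
    fun y hy => hq y (SimpleGraph.Walk.support_dropUntil_subset q hx hy)⟩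

/-- Exit lemma: a walk that starts in `C` and leaves `C` has an initial segment
staying in `C` until it first reaches `Nbhd G C`. -/
lemma exit_lemma {G : SimpleGraph V} {C S' : Set V} :
    ∀ {u v : V} (p : G.Walk u v), (∀ w ∈ p.support, w ∉ S') → u ∈ C → v ∉ C →
      ∃ b, b ∈ Nbhd G C ∧ ∃ q : G.Walk u b,
        (∀ w ∈ q.support, w ∉ S') ∧ (∀ w ∈ q.support, w = b ∨ w ∈ C) := by
  intro u v p
  induction p with
  | nil => intro _ hu hv; exact absurd hu hv
  | @cons a b c hadj q ih =>
    intro hS hu hv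
    by_cases hb : b ∈ C
    · obtain ⟨d, hd, r, hr1, hr2⟩ :=
        ih (fun w hw => hS w (by simp [SimpleGraph.Walk.support_cons, hw])) hb hv
      refine ⟨d, hd, SimpleGraph.Walk.cons hadj r, ?_, ?_⟩
      · intro w hw
        rw [SimpleGraph.Walk.support_cons] at hw
        rcases List.mem_cons.mp hw with rfl | hw
        · exact hS w (SimpleGraph.Walk.start_mem_support _)
        · exact hr1 w hw
      · intro w hw
        rw [SimpleGraph.Walk.support_cons] at hw
        rcases List.mem_cons.mp hw with rfl | hw
        · exact Or.inr hu
        · exact hr2 w hw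
    · refine ⟨b, ⟨hb, a, hu, hadj⟩, SimpleGraph.Walk.cons hadj SimpleGraph.Walk.nil, ?_, ?_⟩
      · intro w hw
        simp only [SimpleGraph.Walk.support_cons, SimpleGraph.Walk.support_nil,
          List.mem_cons, List.mem_singleton] at hw
        rcases hw with rfl | rfl | h
        · exact hS w (SimpleGraph.Walk.start_mem_support _)
        · exact hS w (by simp [SimpleGraph.Walk.support_cons])
        · cases h
      · intro w hw
        simp only [SimpleGraph.Walk.support_cons, SimpleGraph.Walk.support_nil,
          List.mem_cons, List.mem_singleton] at hw
        rcases hw with rfl | rfl | h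
        · exact Or.inr hu
        · exact Or.inl rfl
        · cases h

/-- Key induction for the exchange argument. -/
lemma key_lemma {G : SimpleGraph V} {T B Z A : Set V} {s t : V}
    (htT : t ∉ T) (htB : t ∉ B)
    (hZA : ∀ a ∈ Z, ReachAvoid G A s a ∧ a ∉ A)
    (hCtA : ∀ x, ReachAvoid G T t x → x ∉ B → x ∉ A) :
    ∀ {u v : V} (p : G.Walk u v), v = t → (∀ w ∈ p.support, w ∉ (T \ Z ∪ B)) →
      ReachAvoid G (T ∪ B) u t ∨ ReachAvoid G A s t := by
  intro u v p
  induction p with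
  | nil =>
    rintro rfl _
    exact Or.inl (reachAvoid_refl (fun hm => hm.elim htT htB))
  | @cons a b c hadj q ih =>
    rintro rfl hsup
    rcases ih rfl (fun w hw => hsup w (by simp [SimpleGraph.Walk.support_cons, hw])) with hL | hR
    · by_cases haT : a ∈ T
      · have haZ : a ∈ Z := by
          have h := hsup a (SimpleGraph.Walk.start_mem_support _)
          by_contra h'
          exact h (Or.inl ⟨haT, h'⟩)
        obtain ⟨haRA, haA⟩ := hZA a haZ
        obtain ⟨q', hq'⟩ := hL
        have hq'T : ∀ x ∈ q'.support, x ∉ T := fun x hx h => hq' x hx (Or.inl h)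
        have h2 : ReachAvoid G A a c := by
          refine ⟨SimpleGraph.Walk.cons hadj q', ?_⟩
          intro x hx
          rw [SimpleGraph.Walk.support_cons] at hx
          rcases List.mem_cons.mp hx with rfl | hx
          · exact haA
          · exact hCtA x (support_reach q' hq'T x hx) (fun hB => hq' x hx (Or.inr hB))
        exact Or.inr (reachAvoid_trans haRA h2)
      · obtain ⟨q', hq'⟩ := hL
        refine Or.inl ⟨SimpleGraph.Walk.cons hadj q', ?_⟩
        intro x hx
        rw [SimpleGraph.Walk.support_cons] at hx
        rcases List.mem_cons.mp hx with rfl | hx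
        · rintro (h | h)
          · exact haT h
          · exact hsup x (SimpleGraph.Walk.start_mem_support _) (Or.inr h)
        · exact hq' x hx
    · exact Or.inr hR

end Aux

/-- For a minimum `({s}∪D),t`-separator `T`, with `T' = N_G(C_s(G−T))` and
`G' = G[C_s(G−T) ∪ T' ∪ C_t(G−T)]`, we have `κ_{s,t}(G') = κ_{s,t}(G)`. -/
theorem kappa_induced_eq {V : Type*} [Fintype V] (G : SimpleGraph V) (s t : V)
    (hst : s ≠ t) (hadj : ¬ G.Adj s t) (D : Set V) (hsD : s ∉ D) (htD : t ∉ D)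
    (T : Set V) (hT : IsMinSep G ({s} ∪ D) {t} T)
    (T' W : Set V) (hT' : T' = Nbhd G (SetReach G T {s}))
    (hW : W = SetReach G T {s} ∪ T' ∪ SetReach G T {t}) :
    kappaIn G W {s} {t} = kappa G {s} {t} := by
  classical
  obtain ⟨⟨hTdisj1, hTdisj2, hTsep⟩, hTmin⟩ := hT
  have hsD' : s ∈ ({s} ∪ D : Set V) := Or.inl rfl
  have hsT : s ∉ T := fun h => Set.disjoint_left.mp hTdisj1 h hsD'
  have htT : t ∉ T := fun h => Set.disjoint_left.mp hTdisj2 h rfl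
  subst hT' hW
  set Cs := SetReach G T {s} with hCsdef
  set Ct := SetReach G T {t} with hCtdef
  set T' := Nbhd G Cs with hT'def
  set W := Cs ∪ T' ∪ Ct with hWdef
  have memCs : ∀ {v : V}, v ∈ Cs ↔ ReachAvoid G T s v := by
    intro v; simp [hCsdef, SetReach]
  have memCt : ∀ {v : V}, v ∈ Ct ↔ ReachAvoid G T t v := by
    intro v; simp [hCtdef, SetReach]
  have hsCs : s ∈ Cs := memCs.mpr (reachAvoid_refl hsT)
  have htCt : t ∈ Ct := memCt.mpr (reachAvoid_refl htT)
  have hCsT : ∀ {v : V}, v ∈ Cs → v ∉ T := by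
    intro v hv
    obtain ⟨p, hp⟩ := memCs.mp hv
    exact hp v p.end_mem_support
  have hCtT : ∀ {v : V}, v ∈ Ct → v ∉ T := by
    intro v hv
    obtain ⟨p, hp⟩ := memCt.mp hv
    exact hp v p.end_mem_support
  have htCs : t ∉ Cs := fun h => hTsep s hsD' t rfl (memCs.mp h)
  have hCsCt : ∀ {v : V}, v ∈ Cs → v ∉ Ct := fun {v} hv hv2 =>
    hTsep s hsD' t rfl (reachAvoid_trans (memCs.mp hv) (reachAvoid_symm (memCt.mp hv2)))
  have hT'T : T' ⊆ T := by
    intro v hv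
    obtain ⟨hvCs, x, hx, hadjxv⟩ := hv
    by_contra hvT
    refine hvCs (memCs.mpr (reachAvoid_trans (memCs.mp hx)
      ⟨SimpleGraph.Walk.cons hadjxv SimpleGraph.Walk.nil, ?_⟩))
    intro w hw
    simp only [SimpleGraph.Walk.support_cons, SimpleGraph.Walk.support_nil,
      List.mem_cons, List.mem_singleton] at hw
    rcases hw with rfl | rfl | h
    · exact hCsT hx
    · exact hvT
    · cases h
  have hsT' : s ∉ T' := fun h => h.1 hsCs
  have htT' : t ∉ T' := fun h => htT (hT'T h)
  have hCtW : Ct ⊆ W := fun v hv => Or.inr hv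
  -- easy direction
  have dir1 : kappaIn G W {s} {t} ≤ kappa G {s} {t} := by
    refine le_sInf ?_
    rintro n ⟨S, ⟨hd1, hd2, hsep⟩, rfl⟩
    have hmem : IsSepIn G W {s} {t} (S ∩ W) := by
      refine ⟨Set.inter_subset_right, hd1.mono_left Set.inter_subset_left,
        hd2.mono_left Set.inter_subset_left, ?_⟩
      intro a ha b hb hra
      obtain ⟨p, hp⟩ := hra
      refine hsep a ha b hb ⟨p, fun w hw hwS => ?_⟩
      have h1 := hp w hw
      have hwW : w ∈ W := by
        by_contra h
        exact h1 (Or.inr h)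
      exact h1 (Or.inl ⟨hwS, hwW⟩)
    calc kappaIn G W {s} {t} ≤ ((S ∩ W).ncard : ℕ∞) := sInf_le ⟨S ∩ W, hmem, rfl⟩
      _ ≤ (S.ncard : ℕ∞) := by
          exact_mod_cast Set.ncard_le_ncard Set.inter_subset_left (Set.toFinite S)
  -- hard direction
  have dir2 : kappa G {s} {t} ≤ kappaIn G W {s} {t} := by
    refine le_sInf ?_
    rintro n ⟨S, ⟨hSW, hSs, hSt, hSsep⟩, rfl⟩
    have htS : t ∉ S := fun h => Set.disjoint_left.mp hSt h rfl
    set Z : Set V := {v | v ∈ T' ∧ ReachAvoid G (S ∪ Wᶜ) s v} with hZdef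
    have hZ : ∀ v ∈ Z, v ∉ S ∧ v ∈ W := by
      intro v hv
      obtain ⟨hvT', p, hp⟩ := hv
      have h := hp v p.end_mem_support
      constructor
      · exact fun hs => h (Or.inl hs)
      · by_contra hw
        exact h (Or.inr hw)
    have hZT' : Z ⊆ T' := fun v hv => hv.1
    have hZT : Z ⊆ T := fun v hv => hT'T (hZT' hv)
    -- the exchanged separator
    have hTstarSep : IsSep G ({s} ∪ D) {t} (T \ Z ∪ S ∩ Ct) := by
      refine ⟨?_, ?_, ?_⟩
      · rw [Set.disjoint_left]
        rintro v (⟨hvT, _⟩ | ⟨hvS, hvCt⟩) hv2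
        · exact Set.disjoint_left.mp hTdisj1 hvT hv2
        · exact hTsep v hv2 t rfl (reachAvoid_symm (memCt.mp hvCt))
      · rw [Set.disjoint_left]
        rintro v (⟨hvT, _⟩ | ⟨hvS, _⟩) hv2
        · exact Set.disjoint_left.mp hTdisj2 hvT hv2
        · exact htS ((show v = t from hv2) ▸ hvS)
      · intro a ha b hb hra
        have hb' : b = t := hb
        rw [hb'] at hra
        obtain ⟨p, hp⟩ := hra
        have hkey := key_lemma (G := G) (T := T) (B := S ∩ Ct) (Z := Z) (A := S ∪ Wᶜ)
          (s := s) (t := t) htT (fun h => htS h.1)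
          (fun a ha => ⟨ha.2, (by
            rintro (h | h)
            · exact (hZ a ha).1 h
            · exact h ((hZ a ha).2))⟩)
          (fun x hx hxB => by
            have hxCt : x ∈ Ct := memCt.mpr hx
            rintro (h | h)
            · exact hxB ⟨h, hxCt⟩
            · exact h (hCtW hxCt))
          p rfl hp
        rcases hkey with h | h
        · exact hTsep a ha t rfl (reachAvoid_mono Set.subset_union_left h)
        · exact hSsep s rfl t rfl h
    have hcard1 : T.ncard ≤ (T \ Z ∪ S ∩ Ct).ncard := hTmin _ hTstarSep
    have hZle : Z.ncard ≤ T.ncard := Set.ncard_le_ncard hZT (Set.toFinite T)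
    have hc2 : (T \ Z ∪ S ∩ Ct).ncard ≤ T.ncard - Z.ncard + (S ∩ Ct).ncard := by
      calc (T \ Z ∪ S ∩ Ct).ncard ≤ (T \ Z).ncard + (S ∩ Ct).ncard := Set.ncard_union_le _ _
        _ = T.ncard - Z.ncard + (S ∩ Ct).ncard := by rw [Set.ncard_diff hZT]
    have hZcard : Z.ncard ≤ (S ∩ Ct).ncard := by omega
    -- the small separator of G
    set Sstar := S ∩ (Cs ∪ T') ∪ Z with hSstardef
    have hT'Ct : ∀ v ∈ T', v ∉ Ct := fun v hv h => hCtT h (hT'T hv)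
    have hSstarSep : IsSep G {s} {t} Sstar := by
      refine ⟨?_, ?_, ?_⟩
      · rw [Set.disjoint_left]
        rintro v (⟨hvS, _⟩ | hvZ) hv2
        · exact Set.disjoint_left.mp hSs hvS hv2
        · exact hsT' ((show v = s from hv2) ▸ hZT' hvZ)
      · rw [Set.disjoint_left]
        rintro v (⟨hvS, _⟩ | hvZ) hv2
        · exact htS ((show v = t from hv2) ▸ hvS)
        · exact htT' ((show v = t from hv2) ▸ hZT' hvZ)
      · intro a ha b hb hra
        have ha' : a = s := ha
        have hb' : b = t := hb
        rw [ha', hb'] at hra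
        obtain ⟨p, hp⟩ := hra
        obtain ⟨b, hbT', q, hq1, hq2⟩ := exit_lemma (C := Cs) (S' := Sstar) p hp hsCs htCs
        have hbS : b ∉ Sstar := hq1 b q.end_mem_support
        have hbZ : b ∈ Z := by
          refine ⟨hbT', q, ?_⟩
          intro x hx
          rcases hq2 x hx with rfl | hxCs
          · rintro (h | h)
            · exact hbS (Or.inl ⟨h, Or.inr hbT'⟩)
            · exact h (Or.inl (Or.inr hbT'))
          · rintro (h | h)
            · exact hq1 x hx (Or.inl ⟨h, Or.inl hxCs⟩)
            · exact h (Or.inl (Or.inl hxCs))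
        exact hbS (Or.inr hbZ)
    have hSsplit : S = S ∩ (Cs ∪ T') ∪ S ∩ Ct := by
      ext x
      constructor
      · intro hx
        rcases hSW hx with (h | h) | h
        · exact Or.inl ⟨hx, Or.inl h⟩
        · exact Or.inl ⟨hx, Or.inr h⟩
        · exact Or.inr ⟨hx, h⟩
      · rintro (⟨h, _⟩ | ⟨h, _⟩) <;> exact h
    have hdisj : Disjoint (S ∩ (Cs ∪ T')) (S ∩ Ct) := by
      rw [Set.disjoint_left]
      rintro x ⟨hxS, (h | h)⟩ ⟨_, hxCt⟩
      · exact hCsCt h hxCt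
      · exact hT'Ct x h hxCt
    have hScard : (S ∩ (Cs ∪ T')).ncard + (S ∩ Ct).ncard = S.ncard := by
      rw [← Set.ncard_union_eq hdisj (Set.toFinite _) (Set.toFinite _), ← hSsplit]
    have hSstarcard : Sstar.ncard ≤ S.ncard := by
      calc Sstar.ncard ≤ (S ∩ (Cs ∪ T')).ncard + Z.ncard := Set.ncard_union_le _ _
        _ ≤ (S ∩ (Cs ∪ T')).ncard + (S ∩ Ct).ncard := by omega
        _ = S.ncard := hScard
    calc kappa G {s} {t} ≤ (Sstar.ncard : ℕ∞) := sInf_le ⟨Sstar, hSstarSep, rfl⟩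
      _ ≤ (S.ncard : ℕ∞) := by exact_mod_cast hSstarcard
  exact le_antisymm dir1 dir2
end
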